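/- Let k ≥ 0 and n = 2k+2. If X ⊆ S¹ has n points and satisfies t_b(X) = kπ/(k+1) and t_d(X) = π, then X is a regular n-gon, i.e., the geodesic distance between consecutive points of X (in cyclic order) is 2π/(2k+2) for every pair of consecutive points. -/

import Mathlib

/-!
Since `t_d(X) = π`, every point of `X` has its antipode in `X`. For `x ≠ y` in `X`, the point `y`
is then not the antipode of `x' = x + π`, so `d(x', y)` is at most the second largest distance from
`x'`, hence at most `t_b(X) = kπ/(k+1)`; as `d(x', x) = π`, the triangle inequality gives
`d(x, y) ≥ π - kπ/(k+1) = 2π/n`. But `n` points on a circle of length `2π` that are pairwise at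
least `2π/n` apart leave `n` gaps summing to `2π`, each at least `2π/n`, so all gaps are equal.
-/

/-- The largest distance from `x` to any point of `X`. -/
noncomputable def ptTd (X : Type*) [MetricSpace X] (x : X) : ℝ :=
  sSup (Set.range fun y => dist x y)

/-- The second largest distance (counted with multiplicity over points) from `x`
to points of `X`. -/
noncomputable def ptTb (X : Type*) [MetricSpace X] (x : X) : ℝ :=
  sSup {r : ℝ | ∃ y z : X, y ≠ z ∧ r = min (dist x y) (dist x z)}

/-- `t_b(X) = max_{x ∈ X} t_b(x)`. -/
noncomputable def tbX (X : Type*) [MetricSpace X] : ℝ :=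
  sSup (Set.range (ptTb X))

/-- `t_d(X) = min_{x ∈ X} t_d(x)`. -/
noncomputable def tdX (X : Type*) [MetricSpace X] : ℝ :=
  sInf (Set.range (ptTd X))

section FiniteMetricSpace

variable {X : Type*} [MetricSpace X] [Finite X]

lemma exists_dist_eq_ptTd (x : X) : ∃ y, dist x y = ptTd X x :=
  Set.Nonempty.csSup_mem ⟨_, Set.mem_range_self x⟩ (Set.finite_range _)

lemma tdX_le_ptTd (x : X) : tdX X ≤ ptTd X x :=
  csInf_le (Set.finite_range _).bddBelow ⟨x, rfl⟩

lemma min_dist_le_ptTb {x y z : X} (hyz : y ≠ z) : min (dist x y) (dist x z) ≤ ptTb X x := by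
  refine le_csSup (Set.Finite.bddAbove ?_) ⟨y, z, hyz, rfl⟩
  refine (Set.finite_range fun q : X × X => min (dist x q.1) (dist x q.2)).subset ?_
  rintro _ ⟨y, z, -, rfl⟩
  exact ⟨(y, z), rfl⟩

lemma ptTb_le_tbX (x : X) : ptTb X x ≤ tbX X :=
  le_csSup (Set.finite_range _).bddAbove ⟨x, rfl⟩

lemma dist_le_tbX_of_le_dist {x y z : X} (hyz : y ≠ z) (h : dist x y ≤ dist x z) :
    dist x y ≤ tbX X :=
  calc dist x y = min (dist x y) (dist x z) := (min_eq_left h).symm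
    _ ≤ ptTb X x := min_dist_le_ptTb hyz
    _ ≤ tbX X := ptTb_le_tbX x

end FiniteMetricSpace

lemma Fin.apply_eq_add_mul_of_le_sub {m : ℕ} {a : Fin (m + 1) → ℝ} {g : ℝ}
    (hgap : ∀ i j, i < j → g ≤ a j - a i) (hspan : a (Fin.last m) - a 0 ≤ m * g)
    (i : Fin (m + 1)) : a i = a 0 + i * g := by
  have hsteps : ∀ d : ℕ, ∀ i j : Fin (m + 1), (j : ℕ) = i + d → a i + d * g ≤ a j := by
    intro d
    induction d with
    | zero => intro i j h; simp [Fin.ext h]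
    | succ d ih =>
      intro i j h
      have hmid := ih i ⟨i + d, by omega⟩ rfl
      have hlast := hgap ⟨i + d, by omega⟩ j (Fin.lt_def.mpr (by dsimp only; omega))
      push_cast
      linarith
  have hlow := hsteps i 0 i (by simp)
  have hhigh := hsteps (m - i) i (Fin.last m) (by rw [Fin.val_last]; omega)
  rw [Nat.cast_sub (by omega), sub_mul] at hhigh
  linarith

namespace AddCircle

variable {p : ℝ}

lemma dist_coe_le_abs_sub (x y : ℝ) : dist (x : AddCircle p) y ≤ |x - y| := by
  rw [dist_eq_norm, ← coe_sub]
  exact QuotientAddGroup.norm_mk_le_norm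

variable [hp : Fact (0 < p)]

lemma dist_le_half_period (x y : AddCircle p) : dist x y ≤ p / 2 := by
  simpa [dist_eq_norm, abs_of_pos hp.out] using norm_le_half_period p hp.out.ne' (x := x - y)

lemma eq_half_period_of_norm_eq {x : AddCircle p} (hx : ‖x‖ = p / 2) :
    x = ((p / 2 : ℝ) : AddCircle p) := by
  set r : ℝ := (equivIoc p (-(p / 2)) x).1
  have hr : r ∈ Set.Ioc (-(p / 2)) (-(p / 2) + p) := (equivIoc p (-(p / 2)) x).2
  have hrx : (r : AddCircle p) = x := coe_equivIoc
  have hnorm : ‖(r : AddCircle p)‖ = |r| := by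
    rw [norm_coe_eq_abs_iff p hp.out.ne', abs_of_pos hp.out, abs_le]
    constructor <;> linarith [hr.1, hr.2]
  rw [hrx, hx] at hnorm
  rw [← hrx]
  congr 1
  rcases abs_eq (by linarith [hp.out] : 0 ≤ p / 2) |>.mp hnorm.symm with h | h
  · exact h
  · linarith [hr.1]

lemma eq_add_half_period_of_dist_eq {x y : AddCircle p} (h : dist x y = p / 2) :
    y = x + ((p / 2 : ℝ) : AddCircle p) := by
  rw [← eq_half_period_of_norm_eq (x := y - x) (by rwa [← dist_eq_norm, dist_comm]),
    add_sub_cancel]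

lemma add_half_period_mem_of_tdX_eq {s : Finset (AddCircle p)} (hd : tdX s = p / 2)
    {x : AddCircle p} (hx : x ∈ s) : x + ((p / 2 : ℝ) : AddCircle p) ∈ s := by
  obtain ⟨y, hy⟩ := exists_dist_eq_ptTd (⟨x, hx⟩ : s)
  have hfar : dist x y = p / 2 := by
    refine le_antisymm (dist_le_half_period _ _) ?_
    rw [← hd]
    exact (tdX_le_ptTd _).trans_eq hy.symm
  exact eq_add_half_period_of_dist_eq hfar ▸ y.2

lemma half_period_sub_tbX_le_dist {s : Finset (AddCircle p)} (hd : tdX s = p / 2)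
    {x y : AddCircle p} (hx : x ∈ s) (hy : y ∈ s) (hxy : x ≠ y) : p / 2 - tbX s ≤ dist x y := by
  set x' := x + ((p / 2 : ℝ) : AddCircle p)
  have hx' : x' ∈ s := add_half_period_mem_of_tdX_eq hd hx
  have hx'x : dist x' x = p / 2 := by
    simp [x', dist_eq_norm, abs_of_pos hp.out]
  -- `x` is the antipode of `x'`, so `y` is not the farthest point from `x'`
  have hx'y : dist x' y ≤ tbX s := by
    refine dist_le_tbX_of_le_dist (x := ⟨x', hx'⟩) (y := ⟨y, hy⟩) (z := ⟨x, hx⟩)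
      (fun h => hxy (congrArg Subtype.val h).symm) ?_
    simpa only [Subtype.dist_eq, hx'x] using dist_le_half_period x' y
  linarith [dist_triangle x' y x, dist_comm x y]

lemma exists_strictMono_Ico_of_card_eq {n : ℕ} (s : Finset (AddCircle p)) (hcard : s.card = n) :
    ∃ a : Fin n → ℝ, StrictMono a ∧ (∀ i, a i ∈ Set.Ico 0 (0 + p)) ∧
      s = Finset.univ.image fun i => (a i : AddCircle p) := by
  set t := s.image fun x => (equivIco p 0 x : ℝ)
  have htcard : t.card = n :=
    (Finset.card_image_of_injective s (Subtype.val_injective.comp (equivIco p 0).injective)).trans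
      hcard
  refine ⟨t.orderEmbOfFin htcard, (t.orderEmbOfFin htcard).strictMono, fun i => ?_, ?_⟩
  · obtain ⟨x, -, hx⟩ := Finset.mem_image.mp (t.orderEmbOfFin_mem htcard i)
    exact hx ▸ (equivIco p 0 x).2
  · calc s = t.image (↑) := by simp [t, Finset.image_image, Function.comp_def]
      _ = _ := by
        conv_lhs => rw [← t.image_orderEmbOfFin_univ htcard]
        rw [Finset.image_image]
        rfl

theorem exists_eq_image_of_div_le_dist {n : ℕ} (s : Finset (AddCircle p)) (hcard : s.card = n)
    (hsep : ∀ x ∈ s, ∀ y ∈ s, x ≠ y → p / n ≤ dist x y) :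
    ∃ θ : AddCircle p,
      s = Finset.univ.image fun i : Fin n => θ + (((i : ℕ) * (p / n) : ℝ) : AddCircle p) := by
  cases n with
  | zero => exact ⟨0, by simpa using hcard⟩
  | succ m =>
  obtain ⟨a, ha_mono, ha_mem, rfl⟩ := exists_strictMono_Ico_of_card_eq s hcard
  have hsep' {i j : Fin (m + 1)} (hij : i < j) :
      p / (m + 1 : ℕ) ≤ dist (a j : AddCircle p) (a i) := by
    refine hsep _ (Finset.mem_image_of_mem _ (Finset.mem_univ j)) _
      (Finset.mem_image_of_mem _ (Finset.mem_univ i)) fun h => hij.ne' (ha_mono.injective ?_)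
    exact (coe_eq_coe_iff_of_mem_Ico (ha_mem j) (ha_mem i)).mp h
  have hgap (i j : Fin (m + 1)) (hij : i < j) : p / (m + 1 : ℕ) ≤ a j - a i :=
    (hsep' hij).trans <| (dist_coe_le_abs_sub _ _).trans_eq <| abs_of_pos <| sub_pos.2 (ha_mono hij)
  -- the wrap-around gap, from the last point back to the first one
  have hspan : a (Fin.last m) - a 0 ≤ m * (p / (m + 1 : ℕ)) := by
    rcases (Fin.zero_le (Fin.last m)).eq_or_lt with hm | hm
    · rw [← hm, sub_self]
      exact mul_nonneg m.cast_nonneg (div_nonneg hp.out.le (Nat.cast_nonneg _))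
    have hwrap : p / (m + 1 : ℕ) ≤ a 0 + p - a (Fin.last m) := by
      refine (hsep' hm).trans ?_
      rw [dist_comm, ← coe_add_period p (a 0)]
      refine (dist_coe_le_abs_sub _ _).trans_eq (abs_of_pos ?_)
      linarith [(ha_mem 0).1, (ha_mem (Fin.last m)).2]
    have hsplit : p - p / (m + 1 : ℕ) = m * (p / (m + 1 : ℕ)) := by
      push_cast
      field_simp
      ring
    linarith
  refine ⟨a 0, Finset.image_congr fun i _ => ?_⟩
  rw [Fin.apply_eq_add_mul_of_le_sub hgap hspan i, coe_add]

end AddCircle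

/-- If `X ⊆ S¹` has `n = 2k+2` points with `t_b(X) = kπ/(k+1)` and `t_d(X) = π`,
then `X` is a regular `n`-gon: its points are equally spaced at arc distance
`2π/(2k+2)`. -/
theorem regular_ngon_of_extremal (k : ℕ)
    (s : Finset (AddCircle (2 * Real.pi))) (hcard : s.card = 2 * k + 2)
    (hb : tbX ↥s = (k : ℝ) * Real.pi / (k + 1)) (hd : tdX ↥s = Real.pi) :
    ∃ θ : AddCircle (2 * Real.pi),
      s = Finset.image
        (fun i : Fin (2 * k + 2) =>
          θ + (((i : ℕ) * (2 * Real.pi / (2 * k + 2)) : ℝ) : AddCircle (2 * Real.pi)))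
        Finset.univ := by
  have : Fact (0 < 2 * Real.pi) := ⟨Real.two_pi_pos⟩
  have hsep : ∀ x ∈ s, ∀ y ∈ s, x ≠ y → 2 * Real.pi / ((2 * k + 2 : ℕ) : ℝ) ≤ dist x y := by
    intro x hx y hy hxy
    have h := AddCircle.half_period_sub_tbX_le_dist (by rw [hd]; ring) hx hy hxy
    convert h using 1
    rw [hb]
    push_cast
    field_simp
    ring
  obtain ⟨θ, hθ⟩ := AddCircle.exists_eq_image_of_div_le_dist s hcard hsep
  exact ⟨θ, by simpa using hθ⟩
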